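/- In a colored formative process, if q^{(ν+1)} ⊋ q^{(ν)} for some place q ∈ A and some ν < ξ, then GE(A) > ν. -/

import Mathlib

/-- The image of a ZF-set under an arbitrary function (classically definable). -/
noncomputable def zImage (f : ZFSet → ZFSet) (X : ZFSet) : ZFSet :=
  @ZFSet.image f (Classical.allZFSetDefinable fun s => f (s 0)) X

/-- `℘*(X) = { Y : Y ⊆ ⋃X ∧ ∀ z ∈ X, z ∩ Y ≠ ∅ }` for ZF-sets. -/
def zPowast (X : ZFSet) : ZFSet :=
  ZFSet.sep (fun Y => ∀ z ∈ X, z ∩ Y ≠ ∅) (ZFSet.powerset (ZFSet.sUnion X))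

/-- A formative process: to each place `q` in the ZF-set `P` of places and each
ordinal `μ ≤ xi` is assigned a block `blk q μ`, pairwise disjoint at each stage,
increasing at successors, continuous at limits, empty at `0` and nonempty at `xi`. -/
structure FormativeProcess where
  P : ZFSet
  xi : Ordinal
  blk : ZFSet → Ordinal → ZFSet
  disj : ∀ p ∈ P, ∀ q ∈ P, p ≠ q → ∀ μ ≤ xi, blk p μ ∩ blk q μ = (∅ : ZFSet)
  mono : ∀ q ∈ P, ∀ ν < xi, blk q ν ⊆ blk q (ν + 1)
  limitc : ∀ q ∈ P, ∀ lam ≤ xi, Order.IsSuccLimit lam →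
    ∀ x : ZFSet, x ∈ blk q lam ↔ ∃ ν < lam, x ∈ blk q ν
  init : ∀ q ∈ P, blk q 0 = (∅ : ZFSet)
  final_ne : ∀ q ∈ P, blk q xi ≠ (∅ : ZFSet)

/-- `⋃P^(ν)`, the union of all blocks at stage `ν`. -/
noncomputable def FormativeProcess.stage (F : FormativeProcess) (ν : Ordinal) : ZFSet :=
  ZFSet.sUnion (zImage (fun q => F.blk q ν) F.P)

/-- `⋃A^(•)`, the union of the final blocks of the places in the node `A`. -/
noncomputable def FormativeProcess.nodeUnion (F : FormativeProcess) (A : ZFSet) : ZFSet :=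
  ZFSet.sUnion (zImage (fun q => F.blk q F.xi) A)

open Classical in
/-- The grand event of a node `A`: the stage `ν < xi` at which `⋃A^(•)` appears,
if any exists, and `xi` otherwise. -/
noncomputable def FormativeProcess.GE (F : FormativeProcess) (A : ZFSet) : Ordinal :=
  if h : ∃ ν, ν < F.xi ∧ F.nodeUnion A ∈ F.stage (ν + 1) ∧ F.nodeUnion A ∉ F.stage ν
  then h.choose else F.xi

/-- A colored formative process: a formative process together with a trace
`ν ↦ A_ν ⊆ P` such that the elements new at stage `ν+1` come from
`℘*(A_ν^(ν))` (prolongation) and the coherence requirement holds: no element of the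
final stage lies in `℘*(A_ν^(ν)) \ ⋃P^(ν+1)`. -/
structure ColoredProcess extends FormativeProcess where
  trace : Ordinal → ZFSet
  trace_sub : ∀ ν < xi, trace ν ⊆ P
  prolong : ∀ ν < xi, ∀ x : ZFSet,
    x ∈ toFormativeProcess.stage (ν + 1) → x ∉ toFormativeProcess.stage ν →
      x ∈ zPowast (zImage (fun q => blk q ν) (trace ν))
  coherent : ∀ ν < xi, ∀ x : ZFSet,
    x ∈ toFormativeProcess.stage xi →
      x ∈ zPowast (zImage (fun q => blk q ν) (trace ν)) →
        x ∈ toFormativeProcess.stage (ν + 1)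

/-! If `GE(A) = μ ≤ ν`, then `⋃A^(•)` is new at stage `μ + 1`, so by prolongation it is a subset
of `⋃P^(μ)`. But it contains the element `x` that enters the block of `q` at stage `ν + 1`, and
by monotonicity and disjointness of the blocks such an `x` lies in no block at any stage `μ ≤ ν`. -/

lemma mem_zImage {f : ZFSet → ZFSet} {X y : ZFSet} :
    y ∈ zImage f X ↔ ∃ x ∈ X, f x = y := by
  simp [zImage, ZFSet.mem_image]

lemma mem_sUnion_zImage {f : ZFSet → ZFSet} {X x : ZFSet} :
    x ∈ ZFSet.sUnion (zImage f X) ↔ ∃ p ∈ X, x ∈ f p := by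
  simp [ZFSet.mem_sUnion, mem_zImage]

lemma subset_sUnion_of_mem_zPowast {X Y : ZFSet} (h : Y ∈ zPowast X) : Y ⊆ ZFSet.sUnion X :=
  ZFSet.mem_powerset.mp (ZFSet.mem_sep.mp h).1

namespace FormativeProcess

variable (F : FormativeProcess)

lemma mem_stage {μ : Ordinal} {x : ZFSet} : x ∈ F.stage μ ↔ ∃ p ∈ F.P, x ∈ F.blk p μ :=
  mem_sUnion_zImage

lemma blk_subset_nodeUnion {A q : ZFSet} (hq : q ∈ A) : F.blk q F.xi ⊆ F.nodeUnion A :=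
  fun _ hx => mem_sUnion_zImage.mpr ⟨q, hq, hx⟩

lemma blk_mono {q : ZFSet} (hq : q ∈ F.P) {μ₁ μ₂ : Ordinal} (h : μ₁ ≤ μ₂) (h2 : μ₂ ≤ F.xi) :
    F.blk q μ₁ ⊆ F.blk q μ₂ := by
  induction μ₂ using Ordinal.limitRecOn with
  | zero => rw [nonpos_iff_eq_zero.mp h]
  | add_one ν ih =>
    rcases h.eq_or_lt with rfl | hlt
    · exact le_rfl
    · have hν : ν < F.xi := Order.add_one_le_iff.mp h2
      exact (ih (Order.lt_add_one_iff.mp hlt) hν.le).trans (F.mono q hq ν hν)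
  | limit lam hlam ih =>
    rcases h.eq_or_lt with rfl | hlt
    · exact le_rfl
    · exact fun x hx => (F.limitc q hq lam h2 hlam x).mpr ⟨μ₁, hlt, hx⟩

lemma notMem_stage_of_mem_blk_add_one {q x : ZFSet} (hq : q ∈ F.P) {ν μ : Ordinal}
    (hν : ν < F.xi) (hμ : μ ≤ ν) (hx : x ∈ F.blk q (ν + 1)) (hx' : x ∉ F.blk q ν) :
    x ∉ F.stage μ := by
  intro hxμ
  obtain ⟨p, hp, hxp⟩ := F.mem_stage.mp hxμ
  have hsucc : ν + 1 ≤ F.xi := Order.add_one_le_of_lt hν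
  obtain rfl : p = q := by
    by_contra hpq
    have hx_inter : x ∈ F.blk p (ν + 1) ∩ F.blk q (ν + 1) :=
      ZFSet.mem_inter.mpr ⟨F.blk_mono hp (hμ.trans le_self_add) hsucc hxp, hx⟩
    rw [F.disj p hp q hq hpq (ν + 1) hsucc] at hx_inter
    exact ZFSet.notMem_empty x hx_inter
  exact hx' (F.blk_mono hp hμ hν.le hxp)

lemma nodeUnion_mem_stage_GE_add_one {A : ZFSet} (h : F.GE A < F.xi) :
    F.nodeUnion A ∈ F.stage (F.GE A + 1) ∧ F.nodeUnion A ∉ F.stage (F.GE A) := by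
  rw [GE] at h ⊢
  split_ifs at h ⊢ with hex
  · exact hex.choose_spec.2
  · exact absurd h (lt_irrefl _)

end FormativeProcess

lemma ColoredProcess.subset_stage_of_mem_stage_add_one (F : ColoredProcess) {ν : Ordinal}
    (hν : ν < F.xi) {x : ZFSet} (hx : x ∈ F.stage (ν + 1)) (hx' : x ∉ F.stage ν) :
    x ⊆ F.stage ν := by
  intro y hy
  obtain ⟨p, hp, hyp⟩ :=
    mem_sUnion_zImage.mp (subset_sUnion_of_mem_zPowast (F.prolong ν hν x hx hx') hy)
  exact F.mem_stage.mpr ⟨p, F.trace_sub ν hν hp, hyp⟩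

theorem ColoredProcess.GE_gt_of_block_grows_general (F : ColoredProcess)
    (A : ZFSet) (hA : A ⊆ F.P) (q : ZFSet) (hq : q ∈ A)
    (ν : Ordinal) (hν : ν < F.xi)
    (hgrow : F.blk q (ν + 1) ≠ F.blk q ν) :
    ν < F.toFormativeProcess.GE A := by
  by_contra! hle
  have hqP : q ∈ F.P := hA hq
  obtain ⟨x, hx, hx'⟩ : ∃ x ∈ F.blk q (ν + 1), x ∉ F.blk q ν :=
    SetLike.exists_of_lt ((F.mono q hqP ν hν).lt_of_ne hgrow.symm)
  have hxA : x ∈ F.nodeUnion A :=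
    F.blk_subset_nodeUnion hq (F.blk_mono hqP (Order.add_one_le_of_lt hν) le_rfl hx)
  have hGE : F.GE A < F.xi := hle.trans_lt hν
  obtain ⟨hnew, hold⟩ := F.nodeUnion_mem_stage_GE_add_one hGE
  exact F.notMem_stage_of_mem_blk_add_one hqP hν hle hx hx'
    (F.subset_stage_of_mem_stage_add_one hGE hnew hold hxA)

/-- In a colored formative process, if the block of some place `q ∈ A` grows strictly
between stages `ν` and `ν+1` for some `ν < ξ`, then `GE(A) > ν`. -/
theorem ColoredProcess.GE_gt_of_block_grows (F : ColoredProcess)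
    (hfin : F.P.toSet.Finite) (A : ZFSet) (hA : A ⊆ F.P) (q : ZFSet) (hq : q ∈ A)
    (ν : Ordinal) (hν : ν < F.xi)
    (hgrow : F.blk q (ν + 1) ≠ F.blk q ν) :
    ν < F.toFormativeProcess.GE A :=
  ColoredProcess.GE_gt_of_block_grows_general F A hA q hq ν hν hgrow
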